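/- Let P and Q be probability measures on ℝ^d with supports contained in the closed balls of radius R_P and R_Q (respectively) centered at the origin, let L ≥ 0, let τ : ℝ^d → ℝ, and let M, J₀ ∈ ℝ. Let λ_n ≥ 0 with λ_n → 0, and let (f_n, g_n) be a sequence with each f_n L-Lipschitz and each g_n differentiable with ‖∇g_n(y)‖ ≤ L on the support of Q and ∇g_n measurable. Assume: (i) V_{P,Q}(f_n, g_n) + λ_n s_τ(g_n) → J₀; (ii) 0 ≤ s_τ(g_n) ≤ M for all n; (iii) f_n → f' uniformly on the closed ball of radius max(R_P, L) centered at the origin, where f' is L-Lipschitz; and (iv) ∇g_n → ∇g' uniformly on the support of Q, where g' is differentiable with ‖∇g'(y)‖ ≤ L on the support of Q and ∇g' measurable. Then V_{P,Q}(f', g') = J₀. -/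

import Mathlib

open MeasureTheory Filter Metric
open scoped RealInnerProductSpace

/-- The (topological) support of a measure: the set of points all of whose neighborhoods
have positive measure. -/
def msupport {d : ℕ} (μ : Measure (EuclideanSpace ℝ (Fin d))) :
    Set (EuclideanSpace ℝ (Fin d)) :=
  {x | ∀ U ∈ nhds x, μ U ≠ 0}

/-- The minimax dual objective `V_{P,Q}(f,g)` of Makkuva et al., used in the paper. -/
noncomputable def VPQ {d : ℕ} (P Q : Measure (EuclideanSpace ℝ (Fin d)))
    (f g : EuclideanSpace ℝ (Fin d) → ℝ) : ℝ :=
  -∫ x, f x ∂P - ∫ y, (⟪y, gradient g y⟫ - f (gradient g y)) ∂Q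

/-- The sparsity functional `s_τ(g) = ∫ τ(∇g(y) − y) dQ(y)`. -/
noncomputable def sPen {d : ℕ} (Q : Measure (EuclideanSpace ℝ (Fin d)))
    (τ : EuclideanSpace ℝ (Fin d) → ℝ) (g : EuclideanSpace ℝ (Fin d) → ℝ) : ℝ :=
  ∫ y, τ (gradient g y - y) ∂Q

/-!
Since `0 ≤ s_τ(gₙ) ≤ M` and `λₙ → 0`, the penalty term vanishes in the limit, so it suffices
that `V_{P,Q}(fₙ, gₙ) → V_{P,Q}(f', g')`. Writing the `Q`-integrand as `Φ_f (y, ∇g y)` with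
`Φ_f (y, v) = ⟪y, v⟫ - f v`, both integrands converge uniformly on the supports:
`Φ_{fₙ} → Φ_{f'}` uniformly on the compact set `B(0, R_Q) × B(0, max R_P L)`, where `Φ_{f'}` is
uniformly continuous, and `(y, ∇gₙ y) → (y, ∇g' y)` uniformly and stays in that set. On a finite
measure, uniform convergence on a conull set passes to the integrals by dominated convergence.
-/

open Set Topology

theorem msupport_eq_support {d : ℕ} (μ : Measure (EuclideanSpace ℝ (Fin d))) :
    msupport μ = μ.support := by
  ext x
  simp [msupport, Measure.mem_support_iff_forall, pos_iff_ne_zero]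

theorem ae_mem_msupport {d : ℕ} (μ : Measure (EuclideanSpace ℝ (Fin d))) :
    ∀ᵐ x ∂μ, x ∈ msupport μ := by
  rw [msupport_eq_support]
  exact Measure.support_mem_ae

theorem integrable_comp_of_mapsTo_msupport {d : ℕ} {X : Type*} [TopologicalSpace X]
    {μ : Measure (EuclideanSpace ℝ (Fin d))} [IsFiniteMeasure μ] {φ : X → ℝ} (hφ : Continuous φ)
    {K : Set X} (hK : IsCompact K) {G : EuclideanSpace ℝ (Fin d) → X}
    (hG : AEStronglyMeasurable G μ) (hGK : MapsTo G (msupport μ) K) :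
    Integrable (fun x => φ (G x)) μ := by
  obtain ⟨C, hC⟩ := hK.exists_bound_of_continuousOn hφ.continuousOn
  refine .of_bound (hφ.comp_aestronglyMeasurable hG) C ?_
  filter_upwards [ae_mem_msupport μ] with x hx using hC _ (hGK hx)

theorem tendsto_integral_of_tendstoUniformlyOn {α E ι : Type*} [MeasurableSpace α]
    [NormedAddCommGroup E] [NormedSpace ℝ E] {μ : Measure α} [IsFiniteMeasure μ]
    {l : Filter ι} [l.IsCountablyGenerated] {F : ι → α → E} {f : α → E} {s : Set α}
    (hs : ∀ᵐ x ∂μ, x ∈ s) (hF : ∀ᶠ i in l, AEStronglyMeasurable (F i) μ) (hf : Integrable f μ)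
    (hFf : TendstoUniformlyOn F f l s) :
    Tendsto (fun i => ∫ x, F i x ∂μ) l (𝓝 (∫ x, f x ∂μ)) := by
  refine tendsto_integral_filter_of_dominated_convergence (fun x => ‖f x‖ + 1) hF ?_
    (hf.norm.add (integrable_const 1)) ?_
  · filter_upwards [Metric.tendstoUniformlyOn_iff.1 hFf 1 one_pos] with i hi
    filter_upwards [hs] with x hx
    calc ‖F i x‖ ≤ ‖f x‖ + ‖F i x - f x‖ := norm_le_insert' _ _
      _ ≤ ‖f x‖ + 1 := by
        rw [← dist_eq_norm, dist_comm]
        exact add_le_add_right (hi x hx).le _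
  · filter_upwards [hs] with x hx using hFf.tendsto_at hx

theorem TendstoUniformlyOn.comp_of_uniformContinuousOn {α β γ ι : Type*} [UniformSpace β]
    [UniformSpace γ] {p : Filter ι} {F : ι → β → γ} {f : β → γ} {s : Set β}
    {G : ι → α → β} {g : α → β} {t : Set α} (hF : TendstoUniformlyOn F f p s)
    (hf : UniformContinuousOn f s) (hG : TendstoUniformlyOn G g p t)
    (hGs : ∀ i, MapsTo (G i) t s) (hgs : MapsTo g t s) :
    TendstoUniformlyOn (fun i x => F i (G i x)) (fun x => f (g x)) p t := by
  intro u hu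
  obtain ⟨v, hv, hvu⟩ := comp_mem_uniformity_sets hu
  have hw := mem_inf_principal.1 (hf hv)
  filter_upwards [hG _ hw, hF v hv] with i hGi hFi x hx
  exact hvu (SetRel.prodMk_mem_comp (hGi x hx ⟨hgs hx, hGs i hx⟩) (hFi _ (hGs i hx)))

theorem TendstoUniformlyOn.id_prodMk {α β ι : Type*} [PseudoMetricSpace α]
    [PseudoMetricSpace β] {p : Filter ι} {F : ι → α → β} {f : α → β} {s : Set α}
    (h : TendstoUniformlyOn F f p s) :
    TendstoUniformlyOn (fun i x => (x, F i x)) (fun x => (x, f x)) p s := by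
  rw [Metric.tendstoUniformlyOn_iff] at h ⊢
  intro ε hε
  filter_upwards [h ε hε] with i hi x hx
  simpa [Prod.dist_eq] using hi x hx

section DualObjective

variable {d : ℕ}

local notation "E" => EuclideanSpace ℝ (Fin d)

/-- `VPQ P Q f g = -∫ f ∂P - ∫ dualIntegrand f (y, ∇g y) ∂Q`. -/
noncomputable def dualIntegrand (f : E → ℝ) (p : E × E) : ℝ :=
  ⟪p.1, p.2⟫ - f p.2

theorem continuous_dualIntegrand {f : E → ℝ} (hf : Continuous f) :
    Continuous (dualIntegrand f) :=
  (continuous_fst.inner continuous_snd).sub (hf.comp continuous_snd)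

theorem integrable_dualIntegrand {Q : Measure E} [IsFiniteMeasure Q] {r R : ℝ}
    (hQ : msupport Q ⊆ closedBall 0 r) {f : E → ℝ} (hf : Continuous f) {G : E → E}
    (hG : Measurable G) (hGR : MapsTo G (msupport Q) (closedBall 0 R)) :
    Integrable (fun y => dualIntegrand f (y, G y)) Q :=
  integrable_comp_of_mapsTo_msupport (continuous_dualIntegrand hf)
    ((isCompact_closedBall 0 r).prod (isCompact_closedBall 0 R))
    (measurable_id.prodMk hG).aestronglyMeasurable fun _ hy => ⟨hQ hy, hGR hy⟩

theorem tendstoUniformlyOn_dualIntegrand {ι : Type*} {p : Filter ι} {r R : ℝ} {T : Set E}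
    (hT : T ⊆ closedBall 0 r) {F : ι → E → ℝ} {f : E → ℝ}
    (hFf : TendstoUniformlyOn F f p (closedBall 0 R)) (hf : Continuous f) {G : ι → E → E}
    {g : E → E} (hGg : TendstoUniformlyOn G g p T) (hGR : ∀ i, MapsTo (G i) T (closedBall 0 R))
    (hgR : MapsTo g T (closedBall 0 R)) :
    TendstoUniformlyOn (fun i y => dualIntegrand (F i) (y, G i y))
      (fun y => dualIntegrand f (y, g y)) p T := by
  have hFf' : TendstoUniformlyOn (fun i => dualIntegrand (F i)) (dualIntegrand f) p
      (closedBall 0 r ×ˢ closedBall 0 R) := by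
    rw [Metric.tendstoUniformlyOn_iff] at hFf ⊢
    intro ε hε
    filter_upwards [hFf ε hε] with i hi q hq
    rw [dualIntegrand, dualIntegrand, dist_sub_left]
    exact hi q.2 hq.2
  have huc : UniformContinuousOn (dualIntegrand f) (closedBall 0 r ×ˢ closedBall 0 R) :=
    ((isCompact_closedBall 0 r).prod (isCompact_closedBall 0 R)).uniformContinuousOn_of_continuous
      (continuous_dualIntegrand hf).continuousOn
  exact hFf'.comp_of_uniformContinuousOn huc
    hGg.id_prodMk (fun i _ hy => ⟨hT hy, hGR i hy⟩) fun _ hy => ⟨hT hy, hgR hy⟩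

theorem tendsto_VPQ {P Q : Measure E} [IsFiniteMeasure P] [IsFiniteMeasure Q] {RP RQ L : ℝ}
    (hP : msupport P ⊆ closedBall 0 RP) (hQ : msupport Q ⊆ closedBall 0 RQ)
    {fn gn : ℕ → E → ℝ} {f g : E → ℝ} (hfn : ∀ n, Continuous (fn n)) (hf : Continuous f)
    (hgn : ∀ n, Measurable (gradient (gn n)))
    (hgnL : ∀ n, ∀ y ∈ msupport Q, ‖gradient (gn n) y‖ ≤ L)
    (hg : Measurable (gradient g)) (hgL : ∀ y ∈ msupport Q, ‖gradient g y‖ ≤ L)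
    (hfu : TendstoUniformlyOn fn f atTop (closedBall 0 (max RP L)))
    (hgu : TendstoUniformlyOn (fun n => gradient (gn n)) (gradient g) atTop (msupport Q)) :
    Tendsto (fun n => VPQ P Q (fn n) (gn n)) atTop (𝓝 (VPQ P Q f g)) := by
  have mapsTo_ball {G : E → E} (hG : ∀ y ∈ msupport Q, ‖G y‖ ≤ L) :
      MapsTo G (msupport Q) (closedBall 0 (max RP L)) := fun y hy =>
    mem_closedBall_zero_iff.2 ((hG y hy).trans (le_max_right _ _))
  have hPball : ∀ᵐ x ∂P, x ∈ closedBall 0 (max RP L) := by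
    filter_upwards [ae_mem_msupport P] with x hx
    exact closedBall_subset_closedBall (le_max_left _ _) (hP hx)
  have hPint : Tendsto (fun n => ∫ x, fn n x ∂P) atTop (𝓝 (∫ x, f x ∂P)) :=
    tendsto_integral_of_tendstoUniformlyOn hPball
      (.of_forall fun n => (hfn n).aestronglyMeasurable)
      (integrable_comp_of_mapsTo_msupport hf (isCompact_closedBall 0 RP)
        aestronglyMeasurable_id hP)
      hfu
  have hQint := tendsto_integral_of_tendstoUniformlyOn (ae_mem_msupport Q)
    (.of_forall fun n =>
      (integrable_dualIntegrand hQ (hfn n) (hgn n) (mapsTo_ball (hgnL n))).aestronglyMeasurable)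
    (integrable_dualIntegrand hQ hf hg (mapsTo_ball hgL))
    (tendstoUniformlyOn_dualIntegrand hQ hfu hf hgu (fun n => mapsTo_ball (hgnL n))
      (mapsTo_ball hgL))
  exact hPint.neg.sub hQint

end DualObjective

theorem limit_attains_J0_general {d : ℕ} (P Q : Measure (EuclideanSpace ℝ (Fin d)))
    [IsProbabilityMeasure P] [IsProbabilityMeasure Q]
    (RP RQ : ℝ)
    (hPsupp : msupport P ⊆ closedBall (0 : EuclideanSpace ℝ (Fin d)) RP)
    (hQsupp : msupport Q ⊆ closedBall (0 : EuclideanSpace ℝ (Fin d)) RQ)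
    (L : ℝ)
    (τ : EuclideanSpace ℝ (Fin d) → ℝ) (M J₀ : ℝ)
    (lamn : ℕ → ℝ)
    (hlam0 : Tendsto lamn atTop (nhds 0))
    (fn : ℕ → EuclideanSpace ℝ (Fin d) → ℝ)
    (gn : ℕ → EuclideanSpace ℝ (Fin d) → ℝ)
    (hfnLip : ∀ n, LipschitzWith (Real.toNNReal L) (fn n))
    (hgnb : ∀ n, ∀ y ∈ msupport Q, ‖gradient (gn n) y‖ ≤ L)
    (hgnm : ∀ n, Measurable (fun y => gradient (gn n) y))
    -- (i) the regularized values converge to `J₀`: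
    (hval : Tendsto (fun n => VPQ P Q (fn n) (gn n) + lamn n * sPen Q τ (gn n))
      atTop (nhds J₀))
    -- (ii) the sparsity penalties are uniformly bounded:
    (hsb : ∀ n, 0 ≤ sPen Q τ (gn n) ∧ sPen Q τ (gn n) ≤ M)
    -- (iii) `fₙ → f'` uniformly on the closed ball of radius `max RP L`:
    (f' : EuclideanSpace ℝ (Fin d) → ℝ) (hf'Lip : LipschitzWith (Real.toNNReal L) f')
    (hfu : TendstoUniformlyOn fn f' atTop
      (closedBall (0 : EuclideanSpace ℝ (Fin d)) (max RP L)))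
    -- (iv) `∇gₙ → ∇g'` uniformly on the support of `Q`:
    (g' : EuclideanSpace ℝ (Fin d) → ℝ)
    (hg'b : ∀ y ∈ msupport Q, ‖gradient g' y‖ ≤ L)
    (hg'm : Measurable (fun y => gradient g' y))
    (hgu : TendstoUniformlyOn (fun n y => gradient (gn n) y)
      (fun y => gradient g' y) atTop (msupport Q)) :
    VPQ P Q f' g' = J₀ := by
  have hV := tendsto_VPQ hPsupp hQsupp (fun n => (hfnLip n).continuous) hf'Lip.continuous hgnm
    hgnb hg'm hg'b hfu hgu
  have hpen : Tendsto (fun n => lamn n * sPen Q τ (gn n)) atTop (𝓝 0) :=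
    hlam0.zero_mul_isBoundedUnder_le ⟨M, eventually_map.2 <| .of_forall fun n => by
      simpa [abs_of_nonneg (hsb n).1] using (hsb n).2⟩
  exact tendsto_nhds_unique (by simpa using hV.add hpen) hval

/-- Key step in the proof of Theorem 4.4 of the paper: every uniform limit `(f', g')`
of regularized optimal solutions `(f_{λₙ}, g_{λₙ})` with `λₙ → 0` and
`V_{P,Q}(fₙ,gₙ) + λₙ s_τ(gₙ) → J₀` attains the unregularized optimal value:
`V_{P,Q}(f',g') = J₀`. -/
theorem limit_attains_J0 {d : ℕ} (P Q : Measure (EuclideanSpace ℝ (Fin d)))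
    [IsProbabilityMeasure P] [IsProbabilityMeasure Q]
    (RP RQ : ℝ) (hRP : 0 ≤ RP) (hRQ : 0 ≤ RQ)
    (hPsupp : msupport P ⊆ closedBall (0 : EuclideanSpace ℝ (Fin d)) RP)
    (hQsupp : msupport Q ⊆ closedBall (0 : EuclideanSpace ℝ (Fin d)) RQ)
    (L : ℝ) (hL : 0 ≤ L)
    (τ : EuclideanSpace ℝ (Fin d) → ℝ) (M J₀ : ℝ)
    (lamn : ℕ → ℝ) (hlamn : ∀ n, 0 ≤ lamn n)
    (hlam0 : Tendsto lamn atTop (nhds 0))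
    (fn : ℕ → EuclideanSpace ℝ (Fin d) → ℝ)
    (gn : ℕ → EuclideanSpace ℝ (Fin d) → ℝ)
    (hfnLip : ∀ n, LipschitzWith (Real.toNNReal L) (fn n))
    (hgn : ∀ n, Differentiable ℝ (gn n))
    (hgnb : ∀ n, ∀ y ∈ msupport Q, ‖gradient (gn n) y‖ ≤ L)
    (hgnm : ∀ n, Measurable (fun y => gradient (gn n) y))
    -- (i) the regularized values converge to `J₀`:
    (hval : Tendsto (fun n => VPQ P Q (fn n) (gn n) + lamn n * sPen Q τ (gn n))
      atTop (nhds J₀))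
    -- (ii) the sparsity penalties are uniformly bounded:
    (hsb : ∀ n, 0 ≤ sPen Q τ (gn n) ∧ sPen Q τ (gn n) ≤ M)
    -- (iii) `fₙ → f'` uniformly on the closed ball of radius `max RP L`:
    (f' : EuclideanSpace ℝ (Fin d) → ℝ) (hf'Lip : LipschitzWith (Real.toNNReal L) f')
    (hfu : TendstoUniformlyOn fn f' atTop
      (closedBall (0 : EuclideanSpace ℝ (Fin d)) (max RP L)))
    -- (iv) `∇gₙ → ∇g'` uniformly on the support of `Q`:
    (g' : EuclideanSpace ℝ (Fin d) → ℝ) (hg' : Differentiable ℝ g')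
    (hg'b : ∀ y ∈ msupport Q, ‖gradient g' y‖ ≤ L)
    (hg'm : Measurable (fun y => gradient g' y))
    (hgu : TendstoUniformlyOn (fun n y => gradient (gn n) y)
      (fun y => gradient g' y) atTop (msupport Q)) :
    VPQ P Q f' g' = J₀ :=
  limit_attains_J0_general P Q RP RQ hPsupp hQsupp L τ M J₀ lamn hlam0 fn gn hfnLip hgnb hgnm hval
    hsb f' hf'Lip hfu g' hg'b hg'm hgu
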